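/- For every real m > 0, the limit C₁(m) := lim_{ρ→∞} ρ·exp(−∫_{ρ₊(m)}^{ρ} V_m(σ)^{−1/2} dσ) exists and is a finite strictly positive real number. -/

import Mathlib

noncomputable def Vhp (m ρ : ℝ) : ℝ := ρ ^ 2 + 1 - 2 * m / ρ

/-!
Since `ρ = ρ₊ · exp (∫_{ρ₊}^ρ dσ/σ)`, the expression equals
`ρ₊ · exp (∫_{ρ₊}^ρ (1/σ - V_m(σ)^{-1/2}) dσ)`, so it suffices that this integrand is integrable
on `(ρ₊, ∞)`; then `C₁(m) = ρ₊ · exp (∫_{ρ₊}^∞ (1/σ - V_m(σ)^{-1/2}) dσ) > 0`.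
Near `ρ₊` the root is simple, so `V_m(σ) ≥ c (σ - ρ₊)` and `V_m^{-1/2}` has an integrable
`(σ - ρ₊)^{-1/2}` singularity. For `σ ≥ 2m` we have `σ² ≤ V_m(σ) ≤ σ² + 1`, whence
`0 ≤ 1/σ - V_m(σ)^{-1/2} ≤ σ⁻³`.
-/

open MeasureTheory Set Filter Topology Real

lemma one_div_sqrt_eq_rpow {x : ℝ} (hx : 0 ≤ x) : 1 / √x = x ^ (-(1 / 2) : ℝ) := by
  rw [rpow_neg hx, sqrt_eq_rpow, one_div]

lemma integrableOn_one_div_sqrt_of_mul_sub_le {g : ℝ → ℝ} (hg : Measurable g) {c r b : ℝ}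
    (hc : 0 < c) (hle : ∀ σ ∈ Ioc r b, c * (σ - r) ≤ g σ) :
    IntegrableOn (fun σ => 1 / √(g σ)) (Ioc r b) := by
  have hdom : IntegrableOn (fun σ => c ^ (-(1 / 2) : ℝ) * (σ - r) ^ (-(1 / 2) : ℝ)) (Ioc r b) := by
    rcases le_total r b with hrb | hbr
    · have h := (intervalIntegral.intervalIntegrable_rpow' (r := -(1 / 2)) (by norm_num)
        (a := 0) (b := b - r)).comp_sub_right r
      simp only [zero_add, sub_add_cancel] at h
      exact (intervalIntegrable_iff_integrableOn_Ioc_of_le hrb).mp (h.const_mul _)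
    · simp [Ioc_eq_empty_of_le hbr]
  refine hdom.mono' (hg.sqrt.const_div 1).aestronglyMeasurable
    ((ae_restrict_iff' measurableSet_Ioc).mpr (ae_of_all _ fun σ hσ => ?_))
  have hpos : 0 < c * (σ - r) := mul_pos hc (sub_pos.mpr hσ.1)
  have hgσ := hle σ hσ
  rw [norm_of_nonneg (by positivity), one_div_sqrt_eq_rpow (hpos.le.trans hgσ),
    ← mul_rpow hc.le (sub_pos.mpr hσ.1).le]
  exact rpow_le_rpow_of_nonpos hpos hgσ (by norm_num)

lemma one_div_sub_one_div_sqrt_le {σ v : ℝ} (hσ : 0 < σ) (hlo : σ ^ 2 ≤ v) (hhi : v ≤ σ ^ 2 + 1) :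
    0 ≤ 1 / σ - 1 / √v ∧ 1 / σ - 1 / √v ≤ (σ ^ 3)⁻¹ := by
  have hs : σ ≤ √v := le_sqrt_of_sq_le hlo
  have hs0 : 0 < √v := hσ.trans_le hs
  have hgap : (√v - σ) * (2 * σ) ≤ 1 := by nlinarith [sq_sqrt ((sq_nonneg σ).trans hlo)]
  refine ⟨sub_nonneg.mpr (one_div_le_one_div_of_le hσ hs), ?_⟩
  calc 1 / σ - 1 / √v = (√v - σ) / (σ * √v) := by field_simp
    _ ≤ (√v - σ) / (σ * σ) := by gcongr
    _ ≤ (σ ^ 3)⁻¹ := by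
      rw [div_le_iff₀ (by positivity)]
      field_simp
      nlinarith

lemma integrableOn_Ioi_inv_pow_three {a : ℝ} (ha : 0 < a) :
    IntegrableOn (fun σ : ℝ => (σ ^ 3)⁻¹) (Ioi a) :=
  (integrableOn_Ioi_rpow_of_lt (a := -3) (by norm_num) ha).congr_fun
    (fun σ hσ => by
      simp only [rpow_neg (ha.trans hσ).le, show (3 : ℝ) = (3 : ℕ) by norm_num, rpow_natCast]) measurableSet_Ioi

theorem tendsto_mul_exp_neg_integral {f : ℝ → ℝ} {r : ℝ} (hr : 0 < r)
    (hf : IntegrableOn (fun σ => 1 / σ - f σ) (Ioi r)) :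
    Tendsto (fun ρ => ρ * exp (-∫ σ in r..ρ, f σ)) atTop
      (𝓝 (r * exp (∫ σ in Ioi r, (1 / σ - f σ)))) := by
  refine ((continuous_exp.tendsto _).comp
    (intervalIntegral_tendsto_integral_Ioi r hf tendsto_id)).const_mul r |>.congr' ?_
  filter_upwards [eventually_ge_atTop r] with ρ hρ
  have hρ0 : 0 < ρ := hr.trans_le hρ
  have hinv : IntervalIntegrable (fun σ : ℝ => 1 / σ) volume r ρ :=
    (continuousOn_const.div continuousOn_id fun x hx =>
      (hr.trans_le (uIcc_of_le hρ ▸ hx).1).ne').intervalIntegrable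
  have hg : IntervalIntegrable (fun σ => 1 / σ - f σ) volume r ρ :=
    (intervalIntegrable_iff_integrableOn_Ioc_of_le hρ).mpr (hf.mono_set Ioc_subset_Ioi_self)
  have hlog : ∫ σ in r..ρ, 1 / σ = log (ρ / r) :=
    integral_one_div fun h => (not_le.mpr hr) (uIcc_of_le hρ ▸ h).1
  have hsplit : ∫ σ in r..ρ, f σ = (∫ σ in r..ρ, 1 / σ) - ∫ σ in r..ρ, (1 / σ - f σ) := by
    rw [← intervalIntegral.integral_sub hinv hg]
    simp only [sub_sub_cancel]
  simp only [Function.comp_apply, id]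
  rw [hsplit, hlog, neg_sub, sub_eq_add_neg, exp_add, exp_neg, exp_log (div_pos hρ0 hr)]
  field_simp

lemma measurable_Vhp (m : ℝ) : Measurable (Vhp m) := by
  unfold Vhp
  fun_prop

lemma Vhp_eq_of_root {m r σ : ℝ} (hr : r ^ 3 + r = 2 * m) (hσ : σ ≠ 0) :
    Vhp m σ = (σ - r) * (σ ^ 2 + σ * r + r ^ 2 + 1) / σ := by
  rw [Vhp, ← hr]
  field_simp
  ring

lemma mul_sub_le_Vhp {m r b σ : ℝ} (hr0 : 0 < r) (hr : r ^ 3 + r = 2 * m) (hσ : σ ∈ Ioc r b) :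
    (r ^ 2 + 1) / b * (σ - r) ≤ Vhp m σ := by
  obtain ⟨hrσ, hσb⟩ := hσ
  have hσ0 : 0 < σ := hr0.trans hrσ
  rw [Vhp_eq_of_root hr hσ0.ne', div_mul_eq_mul_div, div_le_div_iff₀ (hσ0.trans_le hσb) hσ0]
  have hd : 0 ≤ σ - r := by linarith
  calc (r ^ 2 + 1) * (σ - r) * σ ≤ (r ^ 2 + 1) * (σ - r) * b := by gcongr
    _ ≤ (σ - r) * (σ ^ 2 + σ * r + r ^ 2 + 1) * b := by
      have : r ^ 2 + 1 ≤ σ ^ 2 + σ * r + r ^ 2 + 1 := by nlinarith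
      nlinarith [mul_le_mul_of_nonneg_left this hd, hσ0.trans_le hσb]

lemma Vhp_mem_Icc {m σ : ℝ} (hm : 0 ≤ m) (hσ : 0 < σ) (h2m : 2 * m ≤ σ) :
    Vhp m σ ∈ Icc (σ ^ 2) (σ ^ 2 + 1) := by
  have : 2 * m / σ ≤ 1 := (div_le_one hσ).mpr h2m
  have : 0 ≤ 2 * m / σ := by positivity
  constructor <;> (unfold Vhp; linarith)

lemma integrableOn_Ioi_one_div_sub_one_div_sqrt_Vhp {m r : ℝ} (hm : 0 ≤ m) (hr0 : 0 < r)
    (hr : r ^ 3 + r = 2 * m) :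
    IntegrableOn (fun σ => 1 / σ - 1 / √(Vhp m σ)) (Ioi r) := by
  set a := max r (2 * m)
  have ha0 : 0 < a := hr0.trans_le (le_max_left _ _)
  have hnear : IntegrableOn (fun σ => 1 / σ - 1 / √(Vhp m σ)) (Ioc r a) := by
    refine Integrable.sub ?_ (integrableOn_one_div_sqrt_of_mul_sub_le (measurable_Vhp m)
      (by positivity) fun σ hσ => mul_sub_le_Vhp hr0 hr hσ)
    refine (ContinuousOn.integrableOn_Icc ?_).mono_set Ioc_subset_Icc_self
    exact continuousOn_const.div continuousOn_id fun x hx => (hr0.trans_le hx.1).ne'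
  have htail : IntegrableOn (fun σ => 1 / σ - 1 / √(Vhp m σ)) (Ioi a) := by
    refine (integrableOn_Ioi_inv_pow_three ha0).mono'
      ((measurable_id.const_div 1).sub ((measurable_Vhp m).sqrt.const_div 1)).aestronglyMeasurable
      ((ae_restrict_iff' measurableSet_Ioi).mpr (ae_of_all _ fun σ hσ => ?_))
    have hσ0 : 0 < σ := ha0.trans hσ
    obtain ⟨hlo, hhi⟩ := Vhp_mem_Icc hm hσ0 ((le_max_right _ _).trans (le_of_lt hσ))
    obtain ⟨hnonneg, hle⟩ := one_div_sub_one_div_sqrt_le hσ0 hlo hhi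
    rwa [norm_of_nonneg hnonneg]
  exact (hnear.union htail).mono_set (Ioc_union_Ioi_eq_Ioi (le_max_left _ _)).symm.subset

theorem C1_limit_exists (m : ℝ) (hm : 0 < m) (ρp : ℝ)
    (hρp : 0 < ρp ∧ ρp ^ 3 + ρp - 2 * m = 0) :
    ∃ C : ℝ, 0 < C ∧
      Filter.Tendsto
        (fun ρ : ℝ => ρ * Real.exp (-∫ σ in ρp..ρ, 1 / Real.sqrt (Vhp m σ)))
        Filter.atTop (nhds C) := by
  obtain ⟨hρp0, hroot⟩ := hρp
  exact ⟨_, by positivity, tendsto_mul_exp_neg_integral hρp0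
    (integrableOn_Ioi_one_div_sub_one_div_sqrt_Vhp hm.le hρp0 (by linarith))⟩
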